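/- Let E be a complex vector space, N ≥ 2, q a primitive N-th root of unity, and d, h endomorphisms with h∘d − q·d∘h = I. Then ∑_{k=0}^{N-1} d^{N-1-k} ∘ h^{N-1} ∘ d^k = [(N−1)!]_q · I, where [(N−1)!]_q = [N−1]_q · [N−2]_q ⋯ [2]_q with [n]_q = 1 + q + ⋯ + q^{n−1}. -/

import Mathlib

noncomputable section QAux

def qint (q : ℂ) (n : ℕ) : ℂ := ∑ i ∈ Finset.range n, q ^ i

def qfact (q : ℂ) : ℕ → ℂ
  | 0 => 1
  | (m+1) => qfact q m * qint q (m+1)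

def qb (q : ℂ) : ℕ → ℕ → ℂ
  | _, 0 => 1
  | 0, _+1 => 0
  | (m+1), (i+1) => qb q m (i+1) + q ^ (m - i) * qb q m i

def cc (q : ℂ) : ℕ → ℕ → ℕ → ℂ
  | 0, _, 0 => 1
  | 0, _, _+1 => 0
  | (m+1), n, 0 => q ^ n * cc q m n 0
  | (m+1), n, (i+1) => q ^ (n - (i+1)) * cc q m n (i+1) + qint q (n - i) * cc q m n i

variable (q : ℂ)

lemma qint_zero : qint q 0 = 0 := by simp [qint]
lemma qint_succ (n : ℕ) : qint q (n+1) = qint q n + q ^ n := by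
  simp [qint, Finset.sum_range_succ]

lemma qint_add (a b : ℕ) : qint q (a + b) = qint q a + q ^ a * qint q b := by
  induction b with
  | zero => simp [qint_zero]
  | succ b ih => rw [← Nat.add_assoc, qint_succ, ih, qint_succ, pow_add]; ring

lemma qb_zero_right (m : ℕ) : qb q m 0 = 1 := by cases m <;> rfl
lemma qb_zero_left (i : ℕ) : qb q 0 (i+1) = 0 := rfl
lemma qb_succ (m i : ℕ) : qb q (m+1) (i+1) = qb q m (i+1) + q ^ (m - i) * qb q m i := rfl

lemma qb_eq_zero {m i : ℕ} (h : m < i) : qb q m i = 0 := by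
  induction m generalizing i with
  | zero => cases i with
    | zero => omega
    | succ i => rfl
  | succ m ih =>
    cases i with
    | zero => omega
    | succ i => rw [qb_succ, ih (by omega), ih (by omega)]; ring

lemma qb_self (m : ℕ) : qb q m m = 1 := by
  induction m with
  | zero => rfl
  | succ m ih => rw [qb_succ, ih, qb_eq_zero q (by omega)]; simp

lemma qb_one (m : ℕ) : qb q m 1 = qint q m := by
  induction m with
  | zero => rw [qb_zero_left, qint_zero]
  | succ m ih => rw [qb_succ, ih, qb_zero_right, qint_succ]; simp

lemma qint_succ' (n : ℕ) : qint q (n+1) = 1 + q * qint q n := by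
  rw [show n + 1 = 1 + n by omega, qint_add]
  simp [qint]

/-- second Pascal rule -/
lemma qb_pascal' (m i : ℕ) : qb q (m+1) (i+1) = qb q m i + q ^ (i+1) * qb q m (i+1) := by
  induction m generalizing i with
  | zero =>
    cases i with
    | zero => simp [qb_succ, qb_zero_left, qb_zero_right]
    | succ i => simp [qb_succ, qb_zero_left]
  | succ m ih =>
    cases i with
    | zero =>
      rw [qb_succ, qb_one, qb_zero_right]
      simp only [Nat.sub_zero, mul_one, zero_add, pow_one]
      linear_combination qint_succ' q (m+1) - qint_succ q (m+1)
    | succ i =>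
      conv_lhs => rw [qb_succ, ih (i+1), ih i]
      conv_rhs => rw [qb_succ q m i, qb_succ q m (i+1)]
      rw [show m + 1 - (i + 1) = m - i by omega]
      rcases le_or_gt (i+1) m with hle | hlt
      · obtain ⟨a, rfl⟩ := Nat.exists_eq_add_of_le hle
        rw [show i + 1 + a - (i+1) = a by omega, show i + 1 + a - i = a + 1 by omega]
        ring
      · rw [qb_eq_zero q (show m < i + 1 by omega), qb_eq_zero q (show m < i + 1 + 1 by omega)]
        ring

/-- hockey stick -/
lemma qb_hockey (i t : ℕ) :
    qb q (i + t + 1) (i+1) = ∑ s ∈ Finset.range (t+1), q ^ ((i+1) * (t - s)) * qb q (i + s) i := by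
  induction t with
  | zero => simp [qb_self]
  | succ t ih =>
    rw [show i + (t+1) + 1 = (i+t+1)+1 by omega, qb_pascal' q (i+t+1) i, ih]
    conv_rhs => rw [Finset.sum_range_succ]
    rw [show (i+1) * (t + 1 - (t+1)) = 0 by simp, pow_zero, one_mul,
      show i + (t+1) = i + t + 1 by omega, add_comm (qb q (i+t+1) i), Finset.mul_sum]
    congr 1
    apply Finset.sum_congr rfl
    intro s hs
    have hs' : s ≤ t := by simpa [Nat.lt_succ_iff] using hs
    rw [show (i+1) * (t + 1 - s) = (i+1) + (i+1) * (t - s) by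
      rw [show t + 1 - s = (t - s) + 1 by omega]; ring, pow_add]
    ring

lemma cc_succ_succ (m n i : ℕ) :
    cc q (m+1) n (i+1) = q ^ (n - (i+1)) * cc q m n (i+1) + qint q (n - i) * cc q m n i := rfl

def qP (q : ℂ) (n i : ℕ) : ℂ := ∏ j ∈ Finset.range i, qint q (n - j)

lemma qP_zero (n : ℕ) : qP q n 0 = 1 := by simp [qP]
lemma qP_succ (n i : ℕ) : qP q n (i+1) = qP q n i * qint q (n - i) := by
  simp [qP, Finset.prod_range_succ]

lemma qP_eq_zero {n i : ℕ} (h : n < i) : qP q n i = 0 := by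
  apply Finset.prod_eq_zero (Finset.mem_range.2 h)
  simp [qint_zero]

lemma cc_closed (m n i : ℕ) :
    cc q m n i = q ^ ((m - i) * (n - i)) * qb q m i * qP q n i := by
  induction m generalizing i with
  | zero =>
    cases i with
    | zero => simp [cc, qb_zero_right, qP_zero]
    | succ i => simp [cc, qb_zero_left]
  | succ m ih =>
    cases i with
    | zero =>
      show q ^ n * cc q m n 0 = _
      rw [ih 0, qb_zero_right, qb_zero_right, qP_zero]
      simp only [Nat.sub_zero, mul_one]
      rw [← pow_add, show n + m * n = (m+1) * n by ring]
    | succ i =>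
      rw [cc_succ_succ, ih (i+1), ih i, qb_succ, qP_succ]
      rcases le_or_gt n i with hni | hin
      · rw [show n - i = 0 by omega, qint_zero]
        ring
      · -- i < n
        rcases le_or_gt m i with hmi | him
        · rcases eq_or_lt_of_le hmi with rfl | hlt
          · rw [qb_eq_zero q (show m < m + 1 by omega), qb_self,
              show m + 1 - (m + 1) = 0 by omega, show m - (m+1) = 0 by omega,
              show m - m = 0 by omega]
            ring
          · rw [qb_eq_zero q (show m < i + 1 by omega), qb_eq_zero q hlt]
            ring
        · -- i < m, i < n
          obtain ⟨a, rfl⟩ := Nat.exists_eq_add_of_le him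
          obtain ⟨b, rfl⟩ := Nat.exists_eq_add_of_le hin
          rw [show i + 1 + a - (i + 1) = a by omega, show i + 1 + a - i = a + 1 by omega,
            show i + 1 + b - (i + 1) = b by omega, show i + 1 + b - i = b + 1 by omega,
            show i + 1 + a + 1 - (i + 1) = a + 1 by omega]
          ring

lemma qfact_zero : qfact q 0 = 1 := rfl
lemma qfact_succ (m : ℕ) : qfact q (m+1) = qfact q m * qint q (m+1) := rfl

lemma qfact_eq {m i : ℕ} (h : i ≤ m) :
    qfact q m = qb q m i * qfact q i * qfact q (m - i) := by
  induction m generalizing i with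
  | zero =>
    interval_cases i
    simp [qfact_zero, qb_zero_right]
  | succ m ih =>
    cases i with
    | zero => simp [qb_zero_right, qfact_zero]
    | succ i =>
      rcases eq_or_lt_of_le h with heq | hlt
      · obtain rfl : i = m := by omega
        simp [qb_self, qfact_zero]
      · have hi : i + 1 ≤ m := by omega
        have hi' : i ≤ m := by omega
        rw [qb_succ, show m + 1 - (i+1) = (m - (i+1)) + 1 by omega, qfact_succ q (m - (i+1)),
          show m - (i+1) + 1 = m - i by omega]
        have e1 := ih hi
        have e2 := ih hi'
        have hsum : qint q (m+1) = qint q (m - i) + q ^ (m - i) * qint q (i+1) := by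
          rw [← qint_add]; congr 1; omega
        rw [qfact_succ q i] at e1
        rw [show m - i = (m - (i+1)) + 1 by omega, qfact_succ,
          show m - (i+1) + 1 = m - i by omega] at e2
        rw [qfact_succ q m, hsum, qfact_succ q i]
        linear_combination qint q (m - i) * e1 + q ^ (m - i) * qint q (i + 1) * e2

lemma qP_mul_qfact {k i : ℕ} (h : i ≤ k) :
    qP q k i * qfact q (k - i) = qfact q k := by
  induction i with
  | zero => simp [qP_zero]
  | succ i ih =>
    have hi : i ≤ k := by omega
    have ih' := ih hi
    rw [show k - i = (k - (i+1)) + 1 by omega, qfact_succ,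
      show k - (i+1) + 1 = k - i by omega] at ih'
    rw [qP_succ, ← ih']
    ring

section Prim

variable {N : ℕ} (hN : 2 ≤ N) (hq : IsPrimitiveRoot q N)
include hN hq

lemma qint_ne_zero {j : ℕ} (h0 : 0 < j) (hj : j < N) : qint q j ≠ 0 := by
  have hq1 : q ≠ 1 := hq.ne_one (by omega)
  rw [qint, geom_sum_eq hq1]
  exact div_ne_zero (sub_ne_zero.2 (hq.pow_ne_one_of_pos_of_lt h0.ne' hj)) (sub_ne_zero.2 hq1)

lemma qfact_ne_zero {j : ℕ} (hj : j < N) : qfact q j ≠ 0 := by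
  induction j with
  | zero => simp [qfact_zero]
  | succ j ih =>
    rw [qfact_succ]
    exact mul_ne_zero (ih (by omega)) (qint_ne_zero q hN hq (by omega) hj)

lemma qb_N_eq_zero {r : ℕ} (h0 : 0 < r) (hr : r < N) : qb q N r = 0 := by
  have hzero : qint q N = 0 := by
    have := hq.geom_sum_eq_zero (show 1 < N by omega)
    simpa [qint] using this
  have hfN : qfact q N = 0 := by
    rw [show N = (N - 1) + 1 by omega, qfact_succ, show N - 1 + 1 = N by omega, hzero, mul_zero]
  have := qfact_eq q (le_of_lt hr)
  rw [hfN] at this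
  have h1 : qfact q r ≠ 0 := qfact_ne_zero q hN hq hr
  have h2 : qfact q (N - r) ≠ 0 := qfact_ne_zero q hN hq (by omega)
  have := this.symm
  rcases mul_eq_zero.1 this with h | h
  · rcases mul_eq_zero.1 h with h' | h'
    · exact h'
    · exact absurd h' h1
  · exact absurd h h2

lemma qP_eq {k i : ℕ} (h : i ≤ k) (hk : k < N) :
    qP q k i = qb q k i * qfact q i := by
  have h1 : qP q k i * qfact q (k - i) = qfact q k := qP_mul_qfact q h
  have h2 : qfact q k = qb q k i * qfact q i * qfact q (k - i) := qfact_eq q h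
  have h3 : qfact q (k - i) ≠ 0 := qfact_ne_zero q hN hq (by omega)
  field_simp at h1
  rw [h2] at h1
  exact mul_right_cancel₀ h3 h1

omit hN hq in
lemma cc_eq_zero_of_lt {m n i : ℕ} (h : n < i) : cc q m n i = 0 := by
  rw [cc_closed, qP_eq_zero q h, mul_zero]

lemma key_sum_zero {i : ℕ} (hi : i < N - 1) :
    ∑ k ∈ Finset.range N, cc q (N-1) k i = 0 := by
  set t := N - 1 - i with ht
  clear_value t
  have hN1 : N = i + t + 1 := by omega
  have h1 : ∑ k ∈ Finset.range N, cc q (N-1) k i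
      = ∑ s ∈ Finset.range (t+1), cc q (N-1) (i+s) i := by
    have hstep : ∑ k ∈ Finset.range N, cc q (N-1) k i
        = ∑ k ∈ Finset.Ico i N, cc q (N-1) k i := by
      rw [Finset.range_eq_Ico,
        ← Finset.sum_Ico_consecutive _ (Nat.zero_le i) (show i ≤ N by omega)]
      have hz : ∑ k ∈ Finset.Ico 0 i, cc q (N-1) k i = 0 := by
        apply Finset.sum_eq_zero
        intro k hk
        exact cc_eq_zero_of_lt q (Finset.mem_Ico.1 hk).2
      rw [hz, zero_add]
    rw [hstep, Finset.sum_Ico_eq_sum_range, show N - i = t + 1 by omega]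
  have h2 : ∀ s ∈ Finset.range (t+1), cc q (N-1) (i+s) i
      = (qb q (N-1) i * qfact q i) * (q ^ (t*s) * qb q (i+s) i) := by
    intro s hs
    have hs' : s ≤ t := by
      have := Finset.mem_range.1 hs; omega
    rw [cc_closed, qP_eq q hN hq (Nat.le_add_right i s) (show i + s < N by omega),
      ← ht, show i + s - i = s by omega]
    ring
  rw [h1, Finset.sum_congr rfl h2, ← Finset.mul_sum]
  have hq0 : q ≠ 0 := hq.ne_zero (by omega)
  have hpow : q ^ ((i+1)*t) ≠ 0 := pow_ne_zero _ hq0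
  have hmul : q ^ ((i+1)*t) * (∑ s ∈ Finset.range (t+1), q ^ (t*s) * qb q (i+s) i)
      = qb q N (i+1) := by
    conv_rhs => rw [hN1]
    rw [qb_hockey q i t, Finset.mul_sum]
    apply Finset.sum_congr rfl
    intro s hs
    have hs' : s ≤ t := by
      have := Finset.mem_range.1 hs; omega
    obtain ⟨u, rfl⟩ : ∃ u, t = s + u := ⟨t - s, by omega⟩
    have harr : (i+1)*(s+u) + (s+u)*s = (i+1)*(s+u-s) + N*s := by
      rw [hN1, show s + u - s = u by omega]; ring
    rw [← mul_assoc, ← pow_add, harr, pow_add, pow_mul q N s, hq.pow_eq_one, one_pow, mul_one]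
  have hbz : qb q N (i+1) = 0 := qb_N_eq_zero q hN hq (by omega) (by omega)
  rw [hbz] at hmul
  rcases mul_eq_zero.1 hmul with h | h
  · exact absurd h hpow
  · rw [h, mul_zero]

lemma key_sum_last :
    ∑ k ∈ Finset.range N, cc q (N-1) k (N-1) = qfact q (N-1) := by
  have hr : Finset.range N = Finset.range ((N-1)+1) := by congr 1; omega
  rw [hr, Finset.sum_range_succ]
  have hz : ∑ k ∈ Finset.range (N-1), cc q (N-1) k (N-1) = 0 := by
    apply Finset.sum_eq_zero
    intro k hk
    exact cc_eq_zero_of_lt q (Finset.mem_range.1 hk)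
  rw [hz, zero_add, cc_closed, qP_eq q hN hq le_rfl (by omega), qb_self]
  simp

end Prim

lemma cc_zero_zero (n : ℕ) : cc q 0 n 0 = 1 := rfl
lemma cc_succ_zero (m n : ℕ) : cc q (m+1) n 0 = q ^ n * cc q m n 0 := rfl

lemma cc_eq_zero_of_gt {m n i : ℕ} (h : m < i) : cc q m n i = 0 := by
  rw [cc_closed, qb_eq_zero q h]
  ring

section Op

variable {A : Type*} [Ring A] [Algebra ℂ A] (d h : A)

lemma h_pow_d (rel : h * d = q • (d * h) + 1) (n : ℕ) :
    h * d ^ n = q ^ n • (d ^ n * h) + qint q n • d ^ (n-1) := by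
  induction n with
  | zero => simp [qint_zero]
  | succ n ih =>
    have hlast : qint q n • (d ^ (n-1) * d) = qint q n • d ^ n := by
      cases n with
      | zero => simp [qint_zero]
      | succ n => rw [Nat.succ_sub_one, ← pow_succ]
    rw [pow_succ, ← mul_assoc, ih, add_mul, smul_mul_assoc, smul_mul_assoc, mul_assoc, rel,
      hlast, mul_add, mul_smul_comm, mul_one, ← mul_assoc, ← pow_succ, smul_add, smul_smul,
      qint_succ]
    rw [show q ^ n * q = q ^ (n+1) by rw [pow_succ], add_smul]
    exact (add_assoc _ _ _).trans (congrArg _ (add_comm (q ^ n • d ^ n : A) (qint q n • d ^ n)))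

lemma h_pow_pow (rel : h * d = q • (d * h) + 1) (m n : ℕ) :
    h ^ m * d ^ n = ∑ i ∈ Finset.range (m+1), cc q m n i • (d ^ (n-i) * h ^ (m-i)) := by
  induction m with
  | zero => simp [cc_zero_zero]
  | succ m ih =>
    have step1 : h ^ (m+1) * d ^ n
        = ∑ i ∈ Finset.range (m+1), cc q m n i • (h * (d ^ (n-i) * h ^ (m-i))) := by
      rw [pow_succ', mul_assoc, ih, Finset.mul_sum]
      simp [mul_smul_comm]
    have step2 : ∀ i ∈ Finset.range (m+1),
        cc q m n i • (h * (d ^ (n-i) * h ^ (m-i)))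
        = (q ^ (n-i) * cc q m n i) • (d ^ (n-i) * h ^ (m+1-i))
          + (qint q (n-i) * cc q m n i) • (d ^ (n-(i+1)) * h ^ (m-i)) := by
      intro i hi
      have him : i ≤ m := by have := Finset.mem_range.1 hi; omega
      rw [← mul_assoc, h_pow_d q d h rel (n-i), add_mul, smul_mul_assoc, smul_mul_assoc,
        mul_assoc, ← pow_succ', show m - i + 1 = m + 1 - i by omega,
        show n - i - 1 = n - (i+1) from Nat.sub_sub n i 1, smul_add, smul_smul, smul_smul,
        mul_comm (cc q m n i) (q ^ (n-i)), mul_comm (cc q m n i) (qint q (n-i))]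
    rw [step1, Finset.sum_congr rfl step2, Finset.sum_add_distrib]
    -- now rewrite the target
    rw [Finset.sum_range_succ' _ (m+1)]
    simp only [Nat.succ_sub_succ_eq_sub, Nat.sub_zero]
    have e : ∀ i ∈ Finset.range (m+1),
        cc q (m+1) n (i+1) • (d ^ (n-(i+1)) * h ^ (m-i))
        = (q ^ (n-(i+1)) * cc q m n (i+1)) • (d ^ (n-(i+1)) * h ^ (m-i))
          + (qint q (n-i) * cc q m n i) • (d ^ (n-(i+1)) * h ^ (m-i)) := by
      intro i hi
      rw [cc_succ_succ, add_smul]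
    rw [Finset.sum_congr rfl e, Finset.sum_add_distrib, cc_succ_zero, add_right_comm]
    congr 1
    -- ∑ (q^(n-(i+1)) * cc m n (i+1)) • (d^(n-(i+1)) * h^(m-i)) + (q^n * cc m n 0) • (d^n * h^(m+1))
    --   = ∑ (q^(n-i) * cc m n i) • (d^(n-i) * h^(m+1-i))
    have hA := Finset.sum_range_succ'
      (fun i => (q ^ (n-i) * cc q m n i) • (d ^ (n-i) * h ^ (m+1-i))) (m+1)
    rw [Finset.sum_range_succ] at hA
    rw [cc_eq_zero_of_gt q (show m < m + 1 by omega)] at hA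
    simp only [mul_zero, zero_smul, add_zero, Nat.succ_sub_succ_eq_sub, Nat.sub_zero] at hA
    rw [← hA]

end Op


lemma qfact_eq_prod_Icc (m : ℕ) : qfact q m = ∏ n ∈ Finset.Icc 1 m, qint q n := by
  induction m with
  | zero => simp [qfact_zero]
  | succ m ih =>
    rw [qfact_succ, ih, ← Finset.prod_Icc_succ_top (by omega : 1 ≤ m + 1)]

end QAux

theorem q_homotopy_sum_formula
    (E : Type*) [AddCommGroup E] [Module ℂ E]
    (N : ℕ) (hN : 2 ≤ N) (q : ℂ) (hq : IsPrimitiveRoot q N)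
    (d h : E →ₗ[ℂ] E)
    (hh : h ∘ₗ d - q • (d ∘ₗ h) = LinearMap.id) :
    (∑ k ∈ Finset.range N, (d ^ (N - 1 - k)) ∘ₗ (h ^ (N - 1)) ∘ₗ (d ^ k)) =
      (∏ n ∈ Finset.Icc 2 (N - 1), ∑ i ∈ Finset.range n, q ^ i) • LinearMap.id := by
  have rel : h * d = q • (d * h) + 1 := by
    have := sub_eq_iff_eq_add.1 hh
    rw [Module.End.mul_eq_comp, Module.End.mul_eq_comp, Module.End.one_eq_id]
    rw [this, add_comm]
  simp only [← Module.End.mul_eq_comp]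
  have main : ∀ k ∈ Finset.range N, d ^ (N-1-k) * (h ^ (N-1) * d ^ k)
      = ∑ i ∈ Finset.range N, cc q (N-1) k i • (d ^ (N-1-i) * h ^ (N-1-i)) := by
    intro k hk
    have hkN : k < N := Finset.mem_range.1 hk
    rw [h_pow_pow q d h rel (N-1) k, show N - 1 + 1 = N by omega, Finset.mul_sum]
    apply Finset.sum_congr rfl
    intro i hi
    rw [mul_smul_comm]
    rcases le_or_gt i k with hik | hki
    · rw [← mul_assoc, ← pow_add, show N-1-k + (k-i) = N-1-i by omega]
    · rw [cc_eq_zero_of_lt q hki, zero_smul, zero_smul]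
  rw [Finset.sum_congr rfl main, Finset.sum_comm]
  have swap : ∀ i ∈ Finset.range N,
      (∑ k ∈ Finset.range N, cc q (N-1) k i • (d ^ (N-1-i) * h ^ (N-1-i)))
      = (∑ k ∈ Finset.range N, cc q (N-1) k i) • (d ^ (N-1-i) * h ^ (N-1-i)) := by
    intro i _
    rw [Finset.sum_smul]
  rw [Finset.sum_congr rfl swap]
  have hr : Finset.range N = Finset.range ((N-1)+1) := by congr 1; omega
  rw [hr, Finset.sum_range_succ, ← hr]
  have hz : ∑ i ∈ Finset.range (N-1),
      (∑ k ∈ Finset.range N, cc q (N-1) k i) • (d ^ (N-1-i) * h ^ (N-1-i)) = 0 := by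
    apply Finset.sum_eq_zero
    intro i hi
    rw [key_sum_zero q hN hq (Finset.mem_range.1 hi), zero_smul]
  rw [hz, zero_add, key_sum_last q hN hq, Nat.sub_self, pow_zero, pow_zero, mul_one]
  have hscal : qfact q (N-1) = ∏ n ∈ Finset.Icc 2 (N - 1), ∑ i ∈ Finset.range n, q ^ i := by
    rw [qfact_eq_prod_Icc]
    have hins : Finset.Icc 1 (N-1) = insert 1 (Finset.Icc 2 (N-1)) := by
      ext x
      simp only [Finset.mem_Icc, Finset.mem_insert]
      omega
    rw [hins, Finset.prod_insert (by simp)]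
    have h1 : qint q 1 = 1 := by simp [qint]
    rw [h1, one_mul]
    rfl
  rw [← hscal, Module.End.one_eq_id]
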